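/- Let X be a connected partial groupoid with X_1 finite. If X has dimension m with m ≥ |X_1 \ X_0| (the number of nonidentity edges), then X is a group: X_0 is a singleton and 𝓔_T : X_n → lim_T X is a bijection for every n ≥ 1 and every spine T of [n]. -/

import Mathlib

/-- A symmetric (simplicial) set: a functor `Υᵒᵖ → Set`, where `Υ` has objects
`[n] = {0,…,n}` (encoded as `Fin (n+1)`) and all functions as morphisms.
For `α : [m] → [n]` and `x ∈ X_n`, `act α x` is `x · α ∈ X_m`. -/
structure SymSet where
  obj : ℕ → Type
  act : ∀ {m n : ℕ}, (Fin (m + 1) → Fin (n + 1)) → obj n → obj m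
  act_id : ∀ {n : ℕ} (x : obj n), act id x = x
  act_comp : ∀ {m n k : ℕ} (α : Fin (m + 1) → Fin (n + 1)) (β : Fin (n + 1) → Fin (k + 1))
      (x : obj k), act α (act β x) = act (β ∘ α) x

namespace SymSet

/-- `x_{ij} ∈ X_1`, the action on `x ∈ X_n` of the map `[1] → [n]` with `0 ↦ i`, `1 ↦ j`. -/
def edge (X : SymSet) {n : ℕ} (i j : Fin (n + 1)) (x : X.obj n) : X.obj 1 :=
  X.act (fun t : Fin 2 => if t = 0 then i else j) x

/-- The domain of an edge, its image under `ι₀ : [0] → [1]`, `0 ↦ 0`. -/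
def edgeDom (X : SymSet) (f : X.obj 1) : X.obj 0 :=
  X.act (fun _ : Fin 1 => (0 : Fin 2)) f

/-- The codomain of an edge, its image under `ι₁ : [0] → [1]`, `0 ↦ 1`. -/
def edgeCod (X : SymSet) (f : X.obj 1) : X.obj 0 :=
  X.act (fun _ : Fin 1 => (1 : Fin 2)) f

/-- The identity edge `id_a` on an object `a ∈ X_0`, induced by the unique map `[1] → [0]`. -/
def identityEdge (X : SymSet) (a : X.obj 0) : X.obj 1 :=
  X.act (fun _ : Fin 2 => (0 : Fin 1)) a

/-- An edge is an identity if it is in the image of `X_0 → X_1`. -/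
def IsIdentityEdge (X : SymSet) (f : X.obj 1) : Prop :=
  ∃ a : X.obj 0, f = X.identityEdge a

/-- The tuple of edges `x_{ij}` (for `i < j` an edge `{i,j}` of the spine `T`)
associated to an `n`-simplex `x`. -/
def spineTuple (X : SymSet) {n : ℕ} (T : SimpleGraph (Fin (n + 1))) (x : X.obj n) :
    ∀ i j : Fin (n + 1), i < j → T.Adj i j → X.obj 1 :=
  fun i j _ _ => X.edge i j x

/-- Membership in `lim_T X`: the components have matching endpoints. -/
def IsSpineLim (X : SymSet) {n : ℕ} (T : SimpleGraph (Fin (n + 1)))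
    (e : ∀ i j : Fin (n + 1), i < j → T.Adj i j → X.obj 1) : Prop :=
  ∃ v : Fin (n + 1) → X.obj 0, ∀ (i j : Fin (n + 1)) (hlt : i < j) (h : T.Adj i j),
    X.edgeDom (e i j hlt h) = v i ∧ X.edgeCod (e i j hlt h) = v j

/-- The limit `lim_T X` of the diagram associated to a spine `T`. -/
def SpineLim (X : SymSet) {n : ℕ} (T : SimpleGraph (Fin (n + 1))) : Type :=
  { e : ∀ i j : Fin (n + 1), i < j → T.Adj i j → X.obj 1 // X.IsSpineLim T e }

lemma spineTuple_isSpineLim (X : SymSet) {n : ℕ} (T : SimpleGraph (Fin (n + 1)))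
    (x : X.obj n) : X.IsSpineLim T (X.spineTuple T x) := by
  refine ⟨fun i => X.act (fun _ : Fin 1 => i) x, fun i j hlt h => ⟨?_, ?_⟩⟩
  · show X.act _ (X.act _ x) = _
    rw [X.act_comp]
    show X.act ((fun t : Fin 2 => if t = 0 then i else j) ∘ fun _ : Fin 1 => 0) x
      = X.act (fun _ : Fin 1 => i) x
    congr 1
  · show X.act _ (X.act _ x) = _
    rw [X.act_comp]
    show X.act ((fun t : Fin 2 => if t = 0 then i else j) ∘ fun _ : Fin 1 => 1) x
      = X.act (fun _ : Fin 1 => j) x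
    congr 1

/-- The map `𝓔_T : X_n → lim_T X`. -/
def spineMap (X : SymSet) {n : ℕ} (T : SimpleGraph (Fin (n + 1))) (x : X.obj n) :
    X.SpineLim T :=
  ⟨X.spineTuple T x, X.spineTuple_isSpineLim T x⟩

/-- A symmetric set is *spiny* if `𝓔_T` is injective for every `n ≥ 1` and
every spine `T` of `[n]` (a tree with vertex set `[n]`). -/
def Spiny (X : SymSet) : Prop :=
  ∀ n : ℕ, 1 ≤ n → ∀ T : SimpleGraph (Fin (n + 1)), T.IsTree →
    Function.Injective (X.spineMap T)

/-- An element `x ∈ X_n` is degenerate if `x = y · σ` for some noninvertible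
surjection `σ : [n] → [k]`. -/
def Degenerate (X : SymSet) {n : ℕ} (x : X.obj n) : Prop :=
  ∃ (k : ℕ) (σ : Fin (n + 1) → Fin (k + 1)) (y : X.obj k),
    Function.Surjective σ ∧ ¬ Function.Bijective σ ∧ x = X.act σ y

/-- A symmetric subset (subfunctor) of `X`. -/
structure SymSubset (X : SymSet) where
  carrier : ∀ n : ℕ, Set (X.obj n)
  act_mem : ∀ {m n : ℕ} (α : Fin (m + 1) → Fin (n + 1)) {x : X.obj n},
    x ∈ carrier n → X.act α x ∈ carrier m

/-- `X` is `n`-skeletal: the smallest symmetric subset of `X` containing all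
of its `n`-simplices is all of `X`. -/
def IsSkeletal (X : SymSet) (n : ℕ) : Prop :=
  ∀ Y : SymSubset X, (∀ x : X.obj n, x ∈ Y.carrier n) →
    ∀ (m : ℕ) (x : X.obj m), x ∈ Y.carrier m

/-- `X` has dimension `n`: it is `n`-skeletal but not `k`-skeletal for `k < n`
(for `n ≥ 1` this is equivalent to not being `(n-1)`-skeletal). -/
def HasDim (X : SymSet) (n : ℕ) : Prop :=
  X.IsSkeletal n ∧ ∀ k : ℕ, k < n → ¬ X.IsSkeletal k

/-- Two objects are related if there is an edge between them (in either direction). -/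
def EdgeRel (X : SymSet) (a b : X.obj 0) : Prop :=
  ∃ f : X.obj 1, (X.edgeDom f = a ∧ X.edgeCod f = b) ∨ (X.edgeDom f = b ∧ X.edgeCod f = a)

/-- `X` is connected: it is nonempty and any two objects are joined by a
zig-zag of edges. -/
def Connected (X : SymSet) : Prop :=
  Nonempty (X.obj 0) ∧ ∀ a b : X.obj 0, Relation.ReflTransGen X.EdgeRel a b

/-- `n_a`: the number of nonidentity edges with domain `a`. -/
noncomputable def nEdges (X : SymSet) (a : X.obj 0) : ℕ :=
  Nat.card { f : X.obj 1 // X.edgeDom f = a ∧ ¬ X.IsIdentityEdge f }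

/-- `p(X)`: the maximum of the `n_a` over all objects `a`. -/
noncomputable def pVal (X : SymSet) : ℕ := ⨆ a : X.obj 0, X.nEdges a

/-- A map of symmetric sets (a natural transformation). -/
structure SymMap (X Y : SymSet) where
  app : ∀ n : ℕ, X.obj n → Y.obj n
  naturality : ∀ {m n : ℕ} (α : Fin (m + 1) → Fin (n + 1)) (x : X.obj n),
    app m (X.act α x) = Y.act α (app n x)

/-- A map of symmetric sets is an isomorphism iff it is levelwise bijective. -/
def SymMap.IsIso {X Y : SymSet} (F : SymMap X Y) : Prop :=
  ∀ n : ℕ, Function.Bijective (F.app n)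

/-- `X` and `Y` are isomorphic symmetric sets. -/
def Isomorphic (X Y : SymSet) : Prop := ∃ F : SymMap X Y, F.IsIso

/-- The Bousfield–Segal map `𝓑_m : X_m → X_1^m`, `x ↦ (x_{01}, x_{02}, …, x_{0m})`. -/
def bousfield (X : SymSet) {m : ℕ} (x : X.obj m) : Fin m → X.obj 1 :=
  fun i => X.edge 0 i.succ x

/-- `X` is spiny in degrees below `q`: `𝓔_T` is injective for every spine `T`
of `[n]` for each `1 ≤ n ≤ q`. -/
def SpinyBelow (X : SymSet) (q : ℕ) : Prop :=
  ∀ n : ℕ, 1 ≤ n → n ≤ q → ∀ T : SimpleGraph (Fin (n + 1)), T.IsTree →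
    Function.Injective (X.spineMap T)

/-- `X` is a groupoid: `𝓔_T : X_n → lim_T X` is a bijection for every `n ≥ 1`
and every spine `T` of `[n]`. -/
def IsGroupoid (X : SymSet) : Prop :=
  ∀ n : ℕ, 1 ≤ n → ∀ T : SimpleGraph (Fin (n + 1)), T.IsTree →
    Function.Bijective (X.spineMap T)

/-- `X` is reduced: `X_0` is a singleton. -/
def Reduced (X : SymSet) : Prop := Nonempty (X.obj 0) ∧ Subsingleton (X.obj 0)

/-- A partial group is a reduced spiny symmetric set. -/
def IsPartialGroup (X : SymSet) : Prop := X.Reduced ∧ X.Spiny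

/-- The levelwise product of two symmetric sets. -/
def prod (X Y : SymSet) : SymSet where
  obj n := X.obj n × Y.obj n
  act α p := (X.act α p.1, Y.act α p.2)
  act_id p := by cases p with | mk a b => simp only [X.act_id, Y.act_id]
  act_comp α β p := by cases p with | mk a b => simp only [X.act_comp, Y.act_comp]

end SymSet

/-!
A nondegenerate `m`-simplex `x` has `m` distinct nonidentity edges `x_{01}, …, x_{0m}`: if two
of them agreed, spininess along the star spine at `0` would make `x` factor through a collapse of
`[m]`. By the bound on `|X_1 \ X_0|` these are all the nonidentity edges (for `m = 0` there are
none), so every nonidentity edge starts and ends at `x_0`, and connectedness makes `X` reduced.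
Every tuple of edges is then of the form `((x·α)_{01}, …, (x·α)_{0n})`, so together with
spininess the Bousfield–Segal maps `X_n → X_1^n` are bijective. Hence
`|X_n| = |X_1|^n = |lim_T X|` for every spine `T` of `[n]`, since `X` is reduced and `T` has `n`
edges, and the injective map `𝓔_T` between these finite sets is a bijection.
-/

lemma Fin.lt_of_surjective_of_not_bijective {n k : ℕ} {σ : Fin (n + 1) → Fin (k + 1)}
    (hs : Function.Surjective σ) (hb : ¬ Function.Bijective σ) : k < n := by
  have hle := Fintype.card_le_of_surjective σ hs
  simp only [Fintype.card_fin, Nat.add_le_add_iff_right] at hle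
  refine lt_of_le_of_ne hle fun hkn => hb ?_
  subst hkn
  exact (Fintype.bijective_iff_surjective_and_card σ).mpr ⟨hs, rfl⟩

lemma SimpleGraph.card_lt_adj_eq_card_edgeSet {V : Type*} [LinearOrder V] (G : SimpleGraph V) :
    Nat.card {p : V × V // p.1 < p.2 ∧ G.Adj p.1 p.2} = Nat.card G.edgeSet := by
  refine Nat.card_congr (Equiv.ofBijective (fun p => ⟨s(p.1.1, p.1.2), p.2.2⟩) ⟨?_, ?_⟩)
  · rintro ⟨⟨a, b⟩, hab, _⟩ ⟨⟨c, d⟩, hcd, _⟩ h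
    rcases Sym2.eq_iff.mp (congrArg Subtype.val h) with ⟨rfl, rfl⟩ | ⟨rfl, rfl⟩
    · rfl
    · exact absurd (hab.trans hcd) (lt_irrefl _)
  · rintro ⟨z, hz⟩
    induction z using Sym2.ind with
    | _ a b =>
      rcases lt_or_gt_of_ne (G.ne_of_adj hz) with hab | hba
      · exact ⟨⟨(a, b), hab, hz⟩, rfl⟩
      · exact ⟨⟨(b, a), hba, hz.symm⟩, Subtype.ext Sym2.eq_swap⟩

namespace SymSet

variable {X : SymSet}

def vert {n : ℕ} (i : Fin (n + 1)) (x : X.obj n) : X.obj 0 :=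
  X.act (fun _ : Fin 1 => i) x

lemma act_obj_zero (α : Fin 1 → Fin 1) (x : X.obj 0) : X.act α x = x := by
  rw [show α = id from funext fun _ => Subsingleton.elim _ _, X.act_id]

lemma edge_act {m n : ℕ} (α : Fin (m + 1) → Fin (n + 1)) (x : X.obj n) (i j : Fin (m + 1)) :
    X.edge i j (X.act α x) = X.edge (α i) (α j) x := by
  unfold edge
  rw [X.act_comp]
  congr 1
  funext t
  by_cases h : t = 0 <;> simp [h]

lemma edgeDom_edge {n : ℕ} (i j : Fin (n + 1)) (x : X.obj n) :
    X.edgeDom (X.edge i j x) = vert i x := by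
  unfold edgeDom edge vert
  rw [X.act_comp]
  rfl

lemma edge_self {n : ℕ} (i : Fin (n + 1)) (x : X.obj n) :
    X.edge i i x = X.identityEdge (vert i x) := by
  unfold edge identityEdge vert
  rw [X.act_comp]
  congr 1
  funext t
  simp

lemma edgeDom_identityEdge (a : X.obj 0) : X.edgeDom (X.identityEdge a) = a := by
  unfold edgeDom identityEdge
  rw [X.act_comp, act_obj_zero]

lemma edgeCod_identityEdge (a : X.obj 0) : X.edgeCod (X.identityEdge a) = a := by
  unfold edgeCod identityEdge
  rw [X.act_comp, act_obj_zero]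

lemma IsIdentityEdge.edgeCod_eq_edgeDom {f : X.obj 1} (hf : X.IsIdentityEdge f) :
    X.edgeCod f = X.edgeDom f := by
  obtain ⟨a, rfl⟩ := hf
  rw [edgeDom_identityEdge, edgeCod_identityEdge]

def rev (f : X.obj 1) : X.obj 1 := X.edge 1 0 f

lemma edgeDom_rev (f : X.obj 1) : X.edgeDom (rev f) = X.edgeCod f :=
  edgeDom_edge 1 0 f

lemma rev_rev (f : X.obj 1) : rev (rev f) = f := by
  unfold rev edge
  rw [X.act_comp]
  convert X.act_id f
  funext t
  fin_cases t <;> rfl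

lemma rev_identityEdge (a : X.obj 0) : rev (X.identityEdge a) = X.identityEdge a := by
  unfold rev edge identityEdge
  rw [X.act_comp]
  rfl

lemma isIdentityEdge_rev {f : X.obj 1} (hf : X.IsIdentityEdge (rev f)) : X.IsIdentityEdge f := by
  obtain ⟨a, ha⟩ := hf
  exact ⟨a, by rw [← rev_rev f, ha, rev_identityEdge]⟩

lemma bousfield_injective (hX : X.Spiny) {n : ℕ} (hn : 1 ≤ n) :
    Function.Injective (X.bousfield (m := n)) := by
  intro x y h
  refine hX n hn _ (SimpleGraph.isTree_starGraph 0) (Subtype.ext ?_)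
  funext i j hij hadj
  obtain rfl : i = 0 :=
    (SimpleGraph.starGraph_adj.mp hadj).2.resolve_right ((Fin.zero_le i).trans_lt hij).ne'
  obtain ⟨j, rfl⟩ := Fin.exists_succ_eq.mpr hij.ne'
  exact congrFun h j

lemma degenerate_of_edge_eq (hX : X.Spiny) {k : ℕ} (x : X.obj (k + 1)) {j r : Fin (k + 2)}
    (hj : j ≠ 0) (hjr : j ≠ r) (h : X.edge 0 j x = X.edge 0 r x) : X.Degenerate x := by
  classical
  -- `x` is fixed by the map sending `j` to `r`, which misses `j`
  set β : Fin (k + 2) → Fin (k + 2) := fun t => if t = j then r else t with hβ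
  have hfix : X.act β x = x := by
    refine bousfield_injective hX (Nat.le_add_left 1 k) (funext fun t => ?_)
    simp only [bousfield, edge_act]
    by_cases ht : t.succ = j <;> simp [hβ, ht, Ne.symm hj, h]
  have hne : ∀ t, β t ≠ j := fun t => by by_cases ht : t = j <;> simp [hβ, ht, Ne.symm hjr]
  choose σ hσ using fun t => Fin.exists_succAbove_eq (hne t)
  refine ⟨k, σ, X.act j.succAbove x, fun u => ⟨j.succAbove u, ?_⟩,
    fun hσ' => by simpa using Fintype.card_of_bijective hσ', ?_⟩
  · apply Fin.succAbove_right_injective (p := j)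
    rw [hσ]
    exact if_neg (Fin.succAbove_ne j u)
  · rw [X.act_comp, show j.succAbove ∘ σ = β from funext hσ, hfix]

lemma SymSubset.mem_of_le {Y : X.SymSubset} {k : ℕ} (hY : ∀ x : X.obj k, x ∈ Y.carrier k)
    {l : ℕ} (hl : l ≤ k) (y : X.obj l) : y ∈ Y.carrier l := by
  -- `y` factors through `X_k` along a retraction `[k] → [l]` of the inclusion `[l] → [k]`
  have hy : X.act (fun u : Fin (l + 1) => (⟨u, by omega⟩ : Fin (k + 1)))
      (X.act (fun t : Fin (k + 1) => (⟨min t l, by omega⟩ : Fin (l + 1))) y) = y := by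
    rw [X.act_comp]
    convert X.act_id y
    funext u
    ext
    simp [Nat.le_of_lt_succ u.isLt]
  rw [← hy]
  exact Y.act_mem _ (hY _)

lemma exists_not_degenerate {k : ℕ} (hdim : X.HasDim (k + 1)) :
    ∃ x : X.obj (k + 1), ¬ X.Degenerate x := by
  by_contra! h
  refine hdim.2 k k.lt_succ_self fun Y hY => hdim.1 Y fun x => ?_
  obtain ⟨l, σ, y, hs, hb, rfl⟩ := h x
  exact Y.act_mem σ (SymSubset.mem_of_le hY (Nat.le_of_lt_succ
    (Fin.lt_of_surjective_of_not_bijective hs hb)) y)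

lemma not_isIdentityEdge_of_not_degenerate (hX : X.Spiny) {k : ℕ} {x : X.obj (k + 1)}
    (hx : ¬ X.Degenerate x) (i : Fin (k + 1)) : ¬ X.IsIdentityEdge (X.bousfield x i) := by
  rintro ⟨a, ha : X.edge 0 i.succ x = _⟩
  refine hx (degenerate_of_edge_eq hX x i.succ_ne_zero i.succ_ne_zero ?_)
  have hdom := congrArg X.edgeDom ha
  rw [edgeDom_edge, edgeDom_identityEdge] at hdom
  rw [edge_self, hdom]
  exact ha

lemma bousfield_injective_of_not_degenerate (hX : X.Spiny) {k : ℕ} {x : X.obj (k + 1)}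
    (hx : ¬ X.Degenerate x) : Function.Injective (X.bousfield x) := by
  intro i i' h
  by_contra hne
  exact hx (degenerate_of_edge_eq hX x i.succ_ne_zero (Fin.succ_injective _ |>.ne hne) h)

lemma Reduced.isSpineLim (hred : X.Reduced) {n : ℕ} (T : SimpleGraph (Fin (n + 1)))
    (e : ∀ i j : Fin (n + 1), i < j → T.Adj i j → X.obj 1) : X.IsSpineLim T e :=
  have := hred.2
  ⟨fun _ => hred.1.some, fun _ _ _ _ => ⟨Subsingleton.elim _ _, Subsingleton.elim _ _⟩⟩

lemma Reduced.card_spineLim (hred : X.Reduced) {n : ℕ} {T : SimpleGraph (Fin (n + 1))}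
    (hT : T.IsTree) : Nat.card (X.SpineLim T) = Nat.card (X.obj 1) ^ n := by
  classical
  let curry : (∀ i j : Fin (n + 1), i < j → T.Adj i j → X.obj 1) ≃
      ({p : Fin (n + 1) × Fin (n + 1) // p.1 < p.2 ∧ T.Adj p.1 p.2} → X.obj 1) :=
    { toFun e p := e p.1.1 p.1.2 p.2.1 p.2.2
      invFun g i j hij h := g ⟨(i, j), hij, h⟩
      left_inv _ := rfl
      right_inv _ := rfl }
  have hedges : Nat.card T.edgeSet = n := by
    have := hT.card_edgeFinset
    rw [Fintype.card_fin, Nat.add_right_cancel_iff, SimpleGraph.edgeFinset_card] at this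
    rwa [Nat.card_eq_fintype_card]
  rw [SpineLim, Nat.card_congr ((Equiv.subtypeUnivEquiv (hred.isSpineLim T)).trans curry),
    Nat.card_fun, SimpleGraph.card_lt_adj_eq_card_edgeSet, hedges]

lemma isGroupoid_of_bousfield_surjective (hX : X.Spiny) (hred : X.Reduced)
    [Finite (X.obj 1)] (hsurj : ∀ n : ℕ, Function.Surjective (X.bousfield (m := n))) :
    X.IsGroupoid := by
  intro n hn T hT
  have hbij : Function.Bijective (X.bousfield (m := n)) := ⟨bousfield_injective hX hn, hsurj n⟩
  have : Finite (X.SpineLim T) := by unfold SpineLim; infer_instance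
  refine (hX n hn T hT).bijective_of_nat_card_le ?_
  rw [hred.card_spineLim hT, Nat.card_eq_of_bijective _ hbij, Nat.card_fun, Nat.card_fin]

lemma exists_simplex_edges_cover_nonidentity (hX : X.Spiny) [Finite (X.obj 1)]
    [Nonempty (X.obj 0)] {m : ℕ} (hdim : X.HasDim m)
    (hm : Nat.card { f : X.obj 1 // ¬ X.IsIdentityEdge f } ≤ m) :
    ∃ (k : ℕ) (x : X.obj k), ∀ f, ¬ X.IsIdentityEdge f → ∃ j, X.edge 0 j x = f := by
  cases m with
  | zero =>
    have : IsEmpty { f : X.obj 1 // ¬ X.IsIdentityEdge f } :=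
      Finite.card_eq_zero_iff.mp (Nat.le_zero.mp hm)
    exact ⟨0, Classical.arbitrary _, fun f hf => (this.false ⟨f, hf⟩).elim⟩
  | succ k =>
    obtain ⟨x, hx⟩ := exists_not_degenerate hdim
    let φ (i : Fin (k + 1)) : { f : X.obj 1 // ¬ X.IsIdentityEdge f } :=
      ⟨X.bousfield x i, not_isIdentityEdge_of_not_degenerate hX hx i⟩
    have hφ : Function.Bijective φ :=
      Function.Injective.bijective_of_nat_card_le
        (fun i i' h => bousfield_injective_of_not_degenerate hX hx (congrArg Subtype.val h))
        (by simpa using hm)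
    refine ⟨k + 1, x, fun f hf => ?_⟩
    obtain ⟨i, hi⟩ := hφ.2 ⟨f, hf⟩
    exact ⟨i.succ, congrArg Subtype.val hi⟩

lemma reduced_of_forall_edgeDom_eq (hconn : X.Connected) (c : X.obj 0)
    (hc : ∀ f, ¬ X.IsIdentityEdge f → X.edgeDom f = c) : X.Reduced := by
  have hcod (f : X.obj 1) (hf : ¬ X.IsIdentityEdge f) : X.edgeCod f = c :=
    edgeDom_rev f ▸ hc (rev f) (mt isIdentityEdge_rev hf)
  have hstep (a b : X.obj 0) (hab : X.EdgeRel a b) (ha : a = c) : b = c := by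
    obtain ⟨f, ⟨rfl, rfl⟩ | ⟨rfl, rfl⟩⟩ := hab
    · by_cases hf : X.IsIdentityEdge f
      · rwa [hf.edgeCod_eq_edgeDom]
      · exact hcod f hf
    · by_cases hf : X.IsIdentityEdge f
      · rwa [← hf.edgeCod_eq_edgeDom]
      · exact hc f hf
  have hall (b : X.obj 0) : b = c := by
    induction hconn.2 c b with
    | refl => rfl
    | tail _ hr ih => exact hstep _ _ hr ih
  exact ⟨⟨c⟩, ⟨fun a b => (hall a).trans (hall b).symm⟩⟩

lemma bousfield_surjective_of_forall_edge_eq {k : ℕ} (x : X.obj k)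
    (hx : ∀ f, ∃ j, X.edge 0 j x = f) (n : ℕ) : Function.Surjective (X.bousfield (m := n)) := by
  intro g
  choose J hJ using hx
  refine ⟨X.act (Fin.cases 0 (J ∘ g)) x, funext fun i => ?_⟩
  simp only [bousfield, edge_act, Fin.cases_zero, Fin.cases_succ, Function.comp_apply, hJ]

end SymSet

open SymSet

/-- a connected finite partial groupoid whose dimension `m` satisfies
`m ≥ |X_1 \ X_0|` is a group. -/
theorem stmt14 (X : SymSet) (hX : X.Spiny) (hconn : X.Connected)
    (hfin : Finite (X.obj 1)) (m : ℕ) (hdim : X.HasDim m)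
    (hm : Nat.card { f : X.obj 1 // ¬ X.IsIdentityEdge f } ≤ m) :
    X.Reduced ∧ X.IsGroupoid := by
  have := hconn.1
  obtain ⟨k, x, hx⟩ := exists_simplex_edges_cover_nonidentity hX hdim hm
  have hred : X.Reduced := reduced_of_forall_edgeDom_eq hconn (vert 0 x) fun f hf => by
    obtain ⟨j, rfl⟩ := hx f hf
    exact edgeDom_edge 0 j x
  have hall (f : X.obj 1) : ∃ j, X.edge 0 j x = f := by
    by_cases hf : X.IsIdentityEdge f
    · obtain ⟨a, rfl⟩ := hf
      exact ⟨0, by rw [edge_self, hred.2.elim (vert 0 x) a]⟩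
    · exact hx f hf
  exact ⟨hred, isGroupoid_of_bousfield_surjective hX hred
    (bousfield_surjective_of_forall_edge_eq x hall)⟩
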